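/- Let Φ' be a (crystallographic, reduced) root system in a real inner product space and let Φ ⊆ Φ' be a root subsystem containing all long roots of Φ'. Then Φ is closed in Φ': for any α₁, α₂ ∈ Φ with α₁ + α₂ ∈ Φ', one has α₁ + α₂ ∈ Φ. -/

import Mathlib

/-- A (crystallographic, reduced) root system in a real inner product space. -/
structure IsCrystRootSystem {V : Type*} [NormedAddCommGroup V] [InnerProductSpace ℝ V]
    (Φ : Set V) : Prop where
  finite : Φ.Finite
  ne_zero : ∀ α ∈ Φ, α ≠ 0
  neg_mem : ∀ α ∈ Φ, -α ∈ Φ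
  reflection_mem : ∀ α ∈ Φ, ∀ β ∈ Φ,
    β - (2 * (inner ℝ β α : ℝ) / (inner ℝ α α : ℝ)) • α ∈ Φ
  crystallographic : ∀ α ∈ Φ, ∀ β ∈ Φ,
    ∃ n : ℤ, 2 * (inner ℝ β α : ℝ) = (n : ℝ) * (inner ℝ α α : ℝ)
  reduced : ∀ α ∈ Φ, ∀ t : ℝ, t • α ∈ Φ → t = 1 ∨ t = -1

/-- Two roots lie in the same irreducible component iff they are connected by a chain
of pairwise non-orthogonal roots. -/
def RootConnected {V : Type*} [NormedAddCommGroup V] [InnerProductSpace ℝ V]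
    (Φ : Set V) (α β : V) : Prop :=
  Relation.ReflTransGen (fun a b => a ∈ Φ ∧ b ∈ Φ ∧ (inner ℝ a b : ℝ) ≠ 0) α β

/-- A root is long if its length is maximal among the roots of the irreducible
component containing it. -/
def IsLongRoot {V : Type*} [NormedAddCommGroup V] [InnerProductSpace ℝ V]
    (Φ : Set V) (α : V) : Prop :=
  α ∈ Φ ∧ ∀ β ∈ Φ, RootConnected Φ α β → (inner ℝ β β : ℝ) ≤ (inner ℝ α α : ℝ)

/-!
If `⟪α₁, α₂⟫ < 0`, the two Cartan integers `2⟪α₁, α₂⟫ / ⟪αᵢ, αᵢ⟫` are negative with product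
at most `3`, so one of them is `-1` and `α₁ + α₂` is the reflection of one summand in the other;
it therefore lies in `Φ`. If `⟪α₁, α₂⟫ ≥ 0`, the squared length of `α₁ + α₂` is at least twice
that of each summand. Since non-orthogonal roots have squared-length ratio `1`, `2` or `3`, a
root longer than `α₁ + α₂` and non-orthogonal to it would have to be orthogonal to both
summands, which is absurd. So `α₁ + α₂` is a long root of `Φ'`, hence lies in `Φ`.
-/

open scoped RealInnerProductSpace

theorem real_inner_self_sub_two_mul_inner_div_smul {V : Type*} [NormedAddCommGroup V]
    [InnerProductSpace ℝ V] (x y : V) :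
    ⟪y - (2 * ⟪y, x⟫ / ⟪x, x⟫) • x, y - (2 * ⟪y, x⟫ / ⟪x, x⟫) • x⟫ = ⟪y, y⟫ := by
  rcases eq_or_ne x 0 with rfl | hx
  · simp
  have := (real_inner_self_pos.2 hx).ne'
  simp only [inner_sub_left, inner_sub_right, real_inner_smul_left, real_inner_smul_right,
    real_inner_comm x y]
  field_simp
  ring

namespace IsCrystRootSystem

variable {V : Type*} [NormedAddCommGroup V] [InnerProductSpace ℝ V] {Φ : Set V} {x y : V}

theorem inner_self_pos (hΦ : IsCrystRootSystem Φ) (hx : x ∈ Φ) : 0 < ⟪x, x⟫ :=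
  real_inner_self_pos.2 (hΦ.ne_zero x hx)

theorem sq_inner_lt_inner_self_mul_inner_self (hΦ : IsCrystRootSystem Φ) (hx : x ∈ Φ)
    (hy : y ∈ Φ) (hyx : y ≠ x) (hyx' : y ≠ -x) : ⟪x, y⟫ ^ 2 < ⟪x, x⟫ * ⟪y, y⟫ := by
  refine (pow_two ⟪x, y⟫ ▸ real_inner_mul_inner_self_le x y).lt_of_ne fun heq => ?_
  have hnorm : ‖⟪x, y⟫‖ = ‖x‖ * ‖y‖ := by
    rw [real_inner_self_eq_norm_sq, real_inner_self_eq_norm_sq, ← mul_pow] at heq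
    rw [Real.norm_eq_abs, ← abs_of_nonneg (by positivity : 0 ≤ ‖x‖ * ‖y‖)]
    exact sq_eq_sq_iff_abs_eq_abs _ _ |>.1 heq
  obtain ⟨r, -, rfl⟩ := (norm_inner_eq_norm_iff (hΦ.ne_zero x hx) (hΦ.ne_zero _ hy)).1 hnorm
  rcases hΦ.reduced x hx r hy with rfl | rfl
  · exact hyx (one_smul ℝ x)
  · exact hyx' (neg_one_smul ℝ x)

theorem cartan_mul_le_three (hΦ : IsCrystRootSystem Φ) (hx : x ∈ Φ) (hy : y ∈ Φ)
    (hyx : y ≠ x) (hyx' : y ≠ -x) {n m : ℤ}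
    (hn : 2 * ⟪y, x⟫ = n * ⟪x, x⟫) (hm : 2 * ⟪x, y⟫ = m * ⟪y, y⟫) : n * m ≤ 3 := by
  have hprod : (n * m : ℝ) * (⟪x, x⟫ * ⟪y, y⟫) = 4 * ⟪x, y⟫ ^ 2 := by
    rw [real_inner_comm x y] at hn
    linear_combination (-2 * ⟪x, y⟫) * hn - n * ⟪x, x⟫ * hm
  have hlt := hΦ.sq_inner_lt_inner_self_mul_inner_self hx hy hyx hyx'
  have hpos := mul_pos (hΦ.inner_self_pos hx) (hΦ.inner_self_pos hy)
  have : (n * m : ℝ) < 4 := by nlinarith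
  exact Int.lt_add_one_iff.1 (by exact_mod_cast this)

theorem exists_inner_self_eq_int_mul_of_lt (hΦ : IsCrystRootSystem Φ) (hx : x ∈ Φ)
    (hy : y ∈ Φ) (hxy : ⟪x, y⟫ ≠ 0) (hlt : ⟪x, x⟫ < ⟪y, y⟫) :
    ∃ k : ℤ, 2 ≤ k ∧ k ≤ 3 ∧ ⟪y, y⟫ = k * ⟪x, x⟫ := by
  have hyx : y ≠ x := by rintro rfl; exact hlt.false
  have hyx' : y ≠ -x := by rintro rfl; rw [inner_neg_neg] at hlt; exact hlt.false
  obtain ⟨n, hn⟩ := hΦ.crystallographic x hx y hy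
  obtain ⟨m, hm⟩ := hΦ.crystallographic y hy x hx
  have hle := hΦ.cartan_mul_le_three hx hy hyx hyx' hn hm
  have ha := hΦ.inner_self_pos hx
  have hb := hΦ.inner_self_pos hy
  rw [real_inner_comm x y] at hn
  have hnm : (n : ℝ) * ⟪x, x⟫ = m * ⟪y, y⟫ := by rw [← hn, ← hm]
  have hm0 : m ≠ 0 := by rintro rfl; exact hxy (by simpa using hm)
  have hpos : 0 < n * m := by
    have : (0 : ℝ) < n * m * (⟪x, x⟫ * ⟪y, y⟫) := by
      rw [show (n * m : ℝ) * (⟪x, x⟫ * ⟪y, y⟫) = (n * ⟪x, x⟫) * (m * ⟪y, y⟫) by ring, hnm]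
      exact mul_self_pos.2 (mul_ne_zero (by exact_mod_cast hm0) hb.ne')
    exact_mod_cast pos_of_mul_pos_left this (by positivity)
  have hsq : m ^ 2 < n ^ 2 := by
    have hm2 : (0 : ℝ) < m ^ 2 := by positivity
    have : (m : ℝ) ^ 2 * ⟪x, x⟫ ^ 2 < n ^ 2 * ⟪x, x⟫ ^ 2 := by
      rw [show (n : ℝ) ^ 2 * ⟪x, x⟫ ^ 2 = m ^ 2 * ⟪y, y⟫ ^ 2 by rw [← mul_pow, hnm]; ring]
      gcongr
    exact_mod_cast lt_of_mul_lt_mul_right this (by positivity)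
  have hm1 : m ^ 2 = 1 := by
    have hmn : m ^ 2 < n * m :=
      (pow_lt_pow_iff_left₀ (by positivity) hpos.le two_ne_zero).1 (by nlinarith)
    obtain ⟨hm_lb, hm_ub⟩ : -1 ≤ m ∧ m ≤ 1 := by constructor <;> nlinarith
    interval_cases m <;> simp_all
  refine ⟨n * m, by nlinarith, hle, ?_⟩
  push_cast
  linear_combination (-(m : ℝ)) * hnm + (-⟪y, y⟫) * (by exact_mod_cast hm1 : (m : ℝ) ^ 2 = 1)

theorem two_mul_inner_self_le_of_lt (hΦ : IsCrystRootSystem Φ) (hx : x ∈ Φ) (hy : y ∈ Φ)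
    (hxy : ⟪x, y⟫ ≠ 0) (hlt : ⟪x, x⟫ < ⟪y, y⟫) : 2 * ⟪x, x⟫ ≤ ⟪y, y⟫ := by
  obtain ⟨k, hk, -, hyy⟩ := hΦ.exists_inner_self_eq_int_mul_of_lt hx hy hxy hlt
  rw [hyy]
  gcongr
  · exact (hΦ.inner_self_pos hx).le
  · exact_mod_cast hk

theorem inner_self_le_three_mul (hΦ : IsCrystRootSystem Φ) (hx : x ∈ Φ) (hy : y ∈ Φ)
    (hxy : ⟪x, y⟫ ≠ 0) : ⟪y, y⟫ ≤ 3 * ⟪x, x⟫ := by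
  have ha := hΦ.inner_self_pos hx
  rcases le_or_gt ⟪y, y⟫ ⟪x, x⟫ with hle | hlt
  · linarith
  obtain ⟨k, -, hk, hyy⟩ := hΦ.exists_inner_self_eq_int_mul_of_lt hx hy hxy hlt
  rw [hyy]
  gcongr
  exact_mod_cast hk

theorem add_mem_of_two_mul_inner_eq_neg (hΦ : IsCrystRootSystem Φ) (hx : x ∈ Φ) (hy : y ∈ Φ)
    (h : 2 * ⟪y, x⟫ = -⟪x, x⟫) : x + y ∈ Φ := by
  have := hΦ.reflection_mem x hx y hy
  rwa [h, neg_div_self (hΦ.inner_self_pos hx).ne', neg_one_smul, sub_neg_eq_add,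
    add_comm] at this

theorem two_mul_inner_eq_neg_of_inner_neg (hΦ : IsCrystRootSystem Φ) (hx : x ∈ Φ) (hy : y ∈ Φ)
    (hyx' : y ≠ -x) (hneg : ⟪x, y⟫ < 0) : 2 * ⟪y, x⟫ = -⟪x, x⟫ ∨ 2 * ⟪x, y⟫ = -⟪y, y⟫ := by
  have ha := hΦ.inner_self_pos hx
  have hb := hΦ.inner_self_pos hy
  have hyx : y ≠ x := by rintro rfl; exact hneg.not_gt ha
  obtain ⟨n, hn⟩ := hΦ.crystallographic x hx y hy
  obtain ⟨m, hm⟩ := hΦ.crystallographic y hy x hx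
  have hle := hΦ.cartan_mul_le_three hx hy hyx hyx' hn hm
  rw [real_inner_comm x y] at hn
  have hn' : n < 0 := by
    have : (n : ℝ) < 0 := by nlinarith
    exact_mod_cast this
  have hm' : m < 0 := by
    have : (m : ℝ) < 0 := by nlinarith
    exact_mod_cast this
  have : n = -1 ∨ m = -1 := by
    by_contra! hne
    nlinarith [show n ≤ -2 by omega, show m ≤ -2 by omega]
  rcases this with rfl | rfl
  · left; rw [real_inner_comm x y, hn]; push_cast; ring
  · right; rw [hm]; push_cast; ring

theorem two_mul_inner_self_le_inner_add_self (hΦ : IsCrystRootSystem Φ) (hx : x ∈ Φ)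
    (hy : y ∈ Φ) (hxy : x + y ∈ Φ) (hnn : 0 ≤ ⟪x, y⟫) : 2 * ⟪x, x⟫ ≤ ⟪x + y, x + y⟫ := by
  have ha := hΦ.inner_self_pos hx
  have hb := hΦ.inner_self_pos hy
  have hexp : ⟪x + y, x + y⟫ = ⟪x, x⟫ + 2 * ⟪x, y⟫ + ⟪y, y⟫ := real_inner_add_add_self x y
  refine hΦ.two_mul_inner_self_le_of_lt hx hxy ?_ (by rw [hexp]; linarith)
  rw [inner_add_right]
  positivity

theorem exists_inner_ne_zero_of_rootConnected (hΦ : IsCrystRootSystem Φ) {β γ : V}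
    (hγ : γ ∈ Φ) (hc : RootConnected Φ β γ) :
    ∃ γ' ∈ Φ, ⟪γ', γ'⟫ = ⟪γ, γ⟫ ∧ ⟪β, γ'⟫ ≠ 0 := by
  induction hc using Relation.ReflTransGen.head_induction_on with
  | refl => exact ⟨γ, hγ, rfl, (hΦ.inner_self_pos hγ).ne'⟩
  | @head x y hxy _ ih =>
    obtain ⟨-, hy, hxy⟩ := hxy
    obtain ⟨γ', hγ', hlen, hyγ'⟩ := ih
    by_cases hxγ' : ⟪x, γ'⟫ = 0
    · -- reflecting `γ'` in `y` keeps its length and makes it non-orthogonal to `x`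
      refine ⟨_, hΦ.reflection_mem y hy γ' hγ',
        by rw [real_inner_self_sub_two_mul_inner_div_smul, hlen], ?_⟩
      rw [inner_sub_right, real_inner_smul_right, hxγ', zero_sub, neg_ne_zero]
      refine mul_ne_zero (div_ne_zero ?_ (hΦ.inner_self_pos hy).ne') hxy
      rwa [real_inner_comm, mul_ne_zero_iff, and_iff_right two_ne_zero]
    · exact ⟨γ', hγ', hlen, hxγ'⟩

theorem isLongRoot_of_forall_inner_ne_zero (hΦ : IsCrystRootSystem Φ) {α : V} (hα : α ∈ Φ)
    (h : ∀ δ ∈ Φ, ⟪α, δ⟫ ≠ 0 → ⟪δ, δ⟫ ≤ ⟪α, α⟫) : IsLongRoot Φ α := by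
  refine ⟨hα, fun γ hγ hc => ?_⟩
  obtain ⟨γ', hγ', hlen, hαγ'⟩ := hΦ.exists_inner_ne_zero_of_rootConnected hγ hc
  exact hlen ▸ h γ' hγ' hαγ'

theorem isLongRoot_add_of_inner_nonneg (hΦ : IsCrystRootSystem Φ) (hx : x ∈ Φ) (hy : y ∈ Φ)
    (hxy : x + y ∈ Φ) (hnn : 0 ≤ ⟪x, y⟫) : IsLongRoot Φ (x + y) := by
  have hx2 := hΦ.two_mul_inner_self_le_inner_add_self hx hy hxy hnn
  have hy2 := hΦ.two_mul_inner_self_le_inner_add_self hy hx (add_comm x y ▸ hxy)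
    (real_inner_comm x y ▸ hnn)
  rw [add_comm y x] at hy2
  refine hΦ.isLongRoot_of_forall_inner_ne_zero hxy fun δ hδ hsδ => ?_
  by_contra! hlt
  have hδ2 := hΦ.two_mul_inner_self_le_of_lt hxy hδ hsδ hlt
  have hδx : ⟪x, δ⟫ = 0 := by
    by_contra hne
    linarith [hΦ.inner_self_le_three_mul hx hδ hne, hΦ.inner_self_pos hx]
  have hδy : ⟪y, δ⟫ = 0 := by
    by_contra hne
    linarith [hΦ.inner_self_le_three_mul hy hδ hne, hΦ.inner_self_pos hy]
  exact hsδ (by rw [inner_add_left, hδx, hδy, add_zero])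

end IsCrystRootSystem

/-- A subsystem of a root system containing all long roots is closed: if
`α₁, α₂ ∈ Φ` and `α₁ + α₂ ∈ Φ'` then `α₁ + α₂ ∈ Φ`. -/
theorem stmt_9 {V : Type*} [NormedAddCommGroup V] [InnerProductSpace ℝ V]
    (Φ' Φ : Set V) (h' : IsCrystRootSystem Φ') (h : IsCrystRootSystem Φ)
    (hsub : Φ ⊆ Φ') (hlong : ∀ α : V, IsLongRoot Φ' α → α ∈ Φ)
    {α₁ α₂ : V} (h₁ : α₁ ∈ Φ) (h₂ : α₂ ∈ Φ) (hsum : α₁ + α₂ ∈ Φ') :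
    α₁ + α₂ ∈ Φ := by
  rcases lt_or_ge ⟪α₁, α₂⟫ 0 with hneg | hnn
  · have hne : α₂ ≠ -α₁ := by
      rintro rfl
      exact h'.ne_zero _ hsum (add_neg_cancel α₁)
    rcases h'.two_mul_inner_eq_neg_of_inner_neg (hsub h₁) (hsub h₂) hne hneg with h₁₂ | h₂₁
    · exact h.add_mem_of_two_mul_inner_eq_neg h₁ h₂ h₁₂
    · exact add_comm α₂ α₁ ▸ h.add_mem_of_two_mul_inner_eq_neg h₂ h₁ h₂₁
  · exact hlong _ (h'.isLongRoot_add_of_inner_nonneg (hsub h₁) (hsub h₂) hsum hnn)
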